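/- Let V be a finite vertex set, let w : V × V → ℝ be a symmetric nonnegative weight function, let (X, d) be a metric space, and for f : V → X define the discrete harmonic energy E(f) = ∑_{(i,j) ∈ V × V} w(i,j) · d(f(i), f(j))². Fix a vertex i₀ ∈ V and suppose f' : V → X agrees with f at every vertex other than i₀, and that f'(i₀) minimizes the local energy x ↦ ∑_{j ∈ V} w(i₀, j) · d(x, f(j))² over all x ∈ X. Then E(f') ≤ E(f). -/
import Mathlib


/-- Moving the image of a single vertex `i₀` to a minimizer of the local energy
does not increase the total discrete harmonic energy. -/
theorem discrete_harmonic_energy_single_update_le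
    {V : Type*} [Fintype V] {X : Type*} [MetricSpace X]
    (w : V → V → ℝ) (hsymm : ∀ i j, w i j = w j i) (hnonneg : ∀ i j, 0 ≤ w i j)
    (E : (V → X) → ℝ)
    (hE : ∀ f : V → X, E f = ∑ i, ∑ j, w i j * dist (f i) (f j) ^ 2)
    (f f' : V → X) (i₀ : V)
    (hagree : ∀ i, i ≠ i₀ → f' i = f i)
    (hmin : ∀ x : X, (∑ j, w i₀ j * dist (f' i₀) (f j) ^ 2)
      ≤ ∑ j, w i₀ j * dist x (f j) ^ 2) :
    E f' ≤ E f := by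
  classical
  have key : ∀ g : V → X,
      E g = 2 * (∑ j ∈ Finset.univ.erase i₀, w i₀ j * dist (g i₀) (g j) ^ 2)
        + ∑ i ∈ Finset.univ.erase i₀, ∑ j ∈ Finset.univ.erase i₀,
            w i j * dist (g i) (g j) ^ 2 := by
    intro g
    rw [hE]
    rw [← Finset.add_sum_erase _ _ (Finset.mem_univ i₀)]
    have h1 : (∑ j, w i₀ j * dist (g i₀) (g j) ^ 2)
        = ∑ j ∈ Finset.univ.erase i₀, w i₀ j * dist (g i₀) (g j) ^ 2 := by
      rw [← Finset.add_sum_erase _ _ (Finset.mem_univ i₀)]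
      simp
    have h2 : ∀ i ∈ Finset.univ.erase i₀,
        (∑ j, w i j * dist (g i) (g j) ^ 2)
        = w i₀ i * dist (g i₀) (g i) ^ 2
          + ∑ j ∈ Finset.univ.erase i₀, w i j * dist (g i) (g j) ^ 2 := by
      intro i hi
      rw [← Finset.add_sum_erase _ _ (Finset.mem_univ i₀), hsymm i i₀,
        dist_comm (g i) (g i₀)]
    rw [h1, Finset.sum_congr rfl h2, Finset.sum_add_distrib]
    ring
  rw [key f, key f']
  have hrest : (∑ i ∈ Finset.univ.erase i₀, ∑ j ∈ Finset.univ.erase i₀,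
      w i j * dist (f' i) (f' j) ^ 2)
      = ∑ i ∈ Finset.univ.erase i₀, ∑ j ∈ Finset.univ.erase i₀,
          w i j * dist (f i) (f j) ^ 2 := by
    refine Finset.sum_congr rfl fun i hi => Finset.sum_congr rfl fun j hj => ?_
    rw [hagree i (Finset.ne_of_mem_erase hi), hagree j (Finset.ne_of_mem_erase hj)]
  have hAf' : (∑ j ∈ Finset.univ.erase i₀, w i₀ j * dist (f' i₀) (f' j) ^ 2)
      = ∑ j ∈ Finset.univ.erase i₀, w i₀ j * dist (f' i₀) (f j) ^ 2 := by
    refine Finset.sum_congr rfl fun j hj => ?_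
    rw [hagree j (Finset.ne_of_mem_erase hj)]
  have hL : (∑ j ∈ Finset.univ.erase i₀, w i₀ j * dist (f' i₀) (f j) ^ 2)
      ≤ ∑ j, w i₀ j * dist (f' i₀) (f j) ^ 2 :=
    Finset.sum_le_sum_of_subset_of_nonneg (Finset.subset_univ _)
      (fun j _ _ => mul_nonneg (hnonneg _ _) (sq_nonneg _))
  have hR : (∑ j, w i₀ j * dist (f i₀) (f j) ^ 2)
      = ∑ j ∈ Finset.univ.erase i₀, w i₀ j * dist (f i₀) (f j) ^ 2 := by
    rw [← Finset.add_sum_erase _ _ (Finset.mem_univ i₀)]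
    simp
  have h := hmin (f i₀)
  rw [hrest, hAf']
  nlinarith [hL, h, hR]
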